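/- arXiv:2305.06797 — 5 statements merged into one kernel-verified Lean document; each statement's English description precedes it below -/
import Mathlib

section
/- For every nonnegative measurable f on (0,∞) and every t ∈ (0,∞), (R_α + H_α) f(t) ≤ (H_α ∘ P) f(t) ≤ (n/(n−α)) (R_α + H_α) f(t), where P f(t) = (1/t)∫_0^t f, R_α f(t) = φ_α(t)∫_0^t f, and H_α f(t) = ∫_t^∞ f(s)φ_α(s) ds. -/
/-!
By Tonelli, `H_α (P f) t = (∫₀ᵗ f) K(t) + ∫ₜ^∞ f(u) K(u) du` with `K(a) = ∫ₐ^∞ φ_α(s)/s ds`, so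
both inequalities reduce to `φ_α ≤ K ≤ (n/(n-α)) φ_α`. With `r = α/n`, the function
`s φ_α(s) = min(s^r, 1)` is nondecreasing and `s^(1-r) φ_α(s) = min(1, s^(-r))` is nonincreasing;
hence on `(a, ∞)` the integrand `φ_α(s)/s` lies between `a φ_α(a) s^(-2)` and
`a^(1-r) φ_α(a) s^(r-2)`, whose integrals are `φ_α(a)` and `φ_α(a)/(1-r)`.
-/

open MeasureTheory Set Real
open scoped ENNReal

/-- `φ_α(t) = min{t^(−1+α/n), t^(−1)}`. -/
noncomputable def phi (n : ℕ) (α : ℝ) (t : ℝ) : ℝ := min (t ^ (-1 + α / n)) t⁻¹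

/-- Hardy averaging operator `P f(t) = (1/t) ∫_0^t f`. -/
noncomputable def Pop (f : ℝ → ℝ≥0∞) (t : ℝ) : ℝ≥0∞ :=
  (∫⁻ s in Set.Ioo (0 : ℝ) t, f s) / ENNReal.ofReal t

/-- `R_α f(t) = φ_α(t) ∫_0^t f`. -/
noncomputable def Rop (n : ℕ) (α : ℝ) (f : ℝ → ℝ≥0∞) (t : ℝ) : ℝ≥0∞ :=
  ENNReal.ofReal (phi n α t) * ∫⁻ s in Set.Ioo (0 : ℝ) t, f s

/-- `H_α f(t) = ∫_t^∞ f(s) φ_α(s) ds`. -/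
noncomputable def Hop (n : ℕ) (α : ℝ) (f : ℝ → ℝ≥0∞) (t : ℝ) : ℝ≥0∞ :=
  ∫⁻ s in Set.Ioi t, f s * ENNReal.ofReal (phi n α s)

lemma lintegral_Ioi_ofReal_mul_rpow {c p a : ℝ} (hc : 0 ≤ c) (hp : p < -1) (ha : 0 < a) :
    ∫⁻ s in Ioi a, ENNReal.ofReal (c * s ^ p) = ENNReal.ofReal (c * (a ^ (p + 1) / -(p + 1))) := by
  rw [← ofReal_integral_eq_lintegral_ofReal ((integrableOn_Ioi_rpow_of_lt hp ha).const_mul c)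
    ((ae_restrict_iff' measurableSet_Ioi).2
      (.of_forall fun s hs => mul_nonneg hc (rpow_nonneg (ha.trans hs).le _))),
    integral_const_mul, integral_Ioi_rpow_of_lt hp ha, div_neg, neg_div]

section phi

variable {n : ℕ} {α : ℝ}

lemma measurable_phi : Measurable (phi n α) :=
  (measurable_id.pow_const _).min measurable_inv

lemma mul_phi {t : ℝ} (ht : 0 < t) : t * phi n α t = min (t ^ (α / n)) 1 := by
  rw [phi, mul_min_of_nonneg _ _ ht.le, mul_inv_cancel₀ ht.ne', mul_comm, ← rpow_add_one ht.ne']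
  ring_nf

lemma rpow_mul_phi {t : ℝ} (ht : 0 < t) :
    t ^ (1 - α / n) * phi n α t = min 1 (t ^ (-(α / n))) := by
  rw [phi, mul_min_of_nonneg _ _ (rpow_nonneg ht.le _), ← rpow_neg_one t, ← rpow_add ht,
    ← rpow_add ht]
  ring_nf
  rw [rpow_zero]

lemma mul_phi_le_mul_phi (hα : 0 ≤ α / n) {a s : ℝ} (ha : 0 < a) (has : a ≤ s) :
    a * phi n α a ≤ s * phi n α s := by
  rw [mul_phi ha, mul_phi (ha.trans_le has)]
  gcongr

lemma rpow_mul_phi_le_rpow_mul_phi (hα : 0 ≤ α / n) {a s : ℝ} (ha : 0 < a) (has : a ≤ s) :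
    s ^ (1 - α / n) * phi n α s ≤ a ^ (1 - α / n) * phi n α a := by
  rw [rpow_mul_phi ha, rpow_mul_phi (ha.trans_le has)]
  exact min_le_min_left _ (rpow_le_rpow_of_nonpos ha has (neg_nonpos.2 hα))

end phi

lemma lintegral_Ioo_eq_add {f : ℝ → ℝ≥0∞} {a t s : ℝ} (hat : a ≤ t) (hts : t < s) :
    ∫⁻ u in Ioo a s, f u = (∫⁻ u in Ioo a t, f u) + ∫⁻ u in Ioo t s, f u := by
  rw [setLIntegral_congr (Ioo_ae_eq_Ioc (a := a) (b := t)), ← Ioc_union_Ioo_eq_Ioo hat hts,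
    lintegral_union measurableSet_Ioo ((Ioc_disjoint_Ioi le_rfl).mono_right Ioo_subset_Ioi_self)]

section Tonelli

variable {f g : ℝ → ℝ≥0∞}

lemma lintegral_Ioi_mul_lintegral_Ioo_eq (hf : Measurable f) (hg : Measurable g) (t : ℝ) :
    ∫⁻ s in Ioi t, g s * ∫⁻ u in Ioo t s, f u = ∫⁻ u in Ioi t, f u * ∫⁻ s in Ioi u, g s := by
  let F : ℝ → ℝ → ℝ≥0∞ := fun s u =>
    {p : ℝ × ℝ | p.2 < p.1}.indicator (fun p => g p.1 * f p.2) (s, u)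
  have hF : Measurable (Function.uncurry F) :=
    ((hg.comp measurable_fst).mul (hf.comp measurable_snd)).indicator
      (measurableSet_lt measurable_snd measurable_fst)
  have h_inner_u (s : ℝ) : ∫⁻ u in Ioi t, F s u = g s * ∫⁻ u in Ioo t s, f u := by
    change ∫⁻ u in Ioi t, (Iio s).indicator (fun u => g s * f u) u = _
    rw [lintegral_indicator measurableSet_Iio, Measure.restrict_restrict measurableSet_Iio,
      inter_comm, Ioi_inter_Iio, lintegral_const_mul _ hf]
  have h_inner_s {u : ℝ} (hu : u ∈ Ioi t) : ∫⁻ s in Ioi t, F s u = f u * ∫⁻ s in Ioi u, g s := by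
    change ∫⁻ s in Ioi t, (Ioi u).indicator (fun s => g s * f u) s = _
    rw [lintegral_indicator measurableSet_Ioi, Measure.restrict_restrict measurableSet_Ioi,
      Ioi_inter_Ioi, sup_eq_left.2 (le_of_lt hu), lintegral_mul_const _ hg, mul_comm]
  calc ∫⁻ s in Ioi t, g s * ∫⁻ u in Ioo t s, f u
      = ∫⁻ s in Ioi t, ∫⁻ u in Ioi t, F s u := by simp only [h_inner_u]
    _ = ∫⁻ u in Ioi t, ∫⁻ s in Ioi t, F s u := lintegral_lintegral_swap hF.aemeasurable
    _ = ∫⁻ u in Ioi t, f u * ∫⁻ s in Ioi u, g s :=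
        setLIntegral_congr_fun measurableSet_Ioi fun u hu => h_inner_s hu

lemma lintegral_Ioi_mul_lintegral_Ioo_eq_add (hf : Measurable f) (hg : Measurable g) {a t : ℝ}
    (hat : a ≤ t) :
    ∫⁻ s in Ioi t, g s * ∫⁻ u in Ioo a s, f u
      = (∫⁻ u in Ioo a t, f u) * (∫⁻ s in Ioi t, g s)
        + ∫⁻ u in Ioi t, f u * ∫⁻ s in Ioi u, g s := by
  calc ∫⁻ s in Ioi t, g s * ∫⁻ u in Ioo a s, f u
      = ∫⁻ s in Ioi t, (g s * ∫⁻ u in Ioo a t, f u) + g s * ∫⁻ u in Ioo t s, f u :=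
        setLIntegral_congr_fun measurableSet_Ioi fun s hs => by
          rw [lintegral_Ioo_eq_add hat hs, mul_add]
    _ = _ := by
        rw [lintegral_add_left (hg.mul_const _), lintegral_mul_const _ hg, mul_comm,
          lintegral_Ioi_mul_lintegral_Ioo_eq hf hg]

end Tonelli

noncomputable def phiTail (n : ℕ) (α a : ℝ) : ℝ≥0∞ :=
  ∫⁻ s in Ioi a, ENNReal.ofReal (phi n α s / s)

section phiTail

variable {n : ℕ} {α : ℝ}

lemma ofReal_phi_le_phiTail (hα : 0 ≤ α / n) {a : ℝ} (ha : 0 < a) :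
    ENNReal.ofReal (phi n α a) ≤ phiTail n α a := by
  have hphi : 0 ≤ a * phi n α a := by rw [mul_phi ha]; positivity
  calc ENNReal.ofReal (phi n α a)
      = ∫⁻ s in Ioi a, ENNReal.ofReal (a * phi n α a * s ^ (-2 : ℝ)) := by
        rw [lintegral_Ioi_ofReal_mul_rpow hphi (by norm_num) ha]
        norm_num [rpow_neg_one]
        field_simp
    _ ≤ phiTail n α a := by
        refine setLIntegral_mono' measurableSet_Ioi fun s has => ENNReal.ofReal_le_ofReal ?_
        have hs : 0 < s := ha.trans has
        calc a * phi n α a * s ^ (-2 : ℝ) ≤ s * phi n α s * s ^ (-2 : ℝ) := by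
              gcongr ?_ * _; exact mul_phi_le_mul_phi hα ha (le_of_lt has)
          _ = phi n α s / s := by
              rw [rpow_neg hs.le, rpow_two]; field_simp

lemma phiTail_le (hα : 0 ≤ α / n) (hα1 : α / n < 1) {a : ℝ} (ha : 0 < a) :
    phiTail n α a ≤ ENNReal.ofReal (1 - α / n)⁻¹ * ENNReal.ofReal (phi n α a) := by
  have hphi : 0 ≤ a ^ (1 - α / n) * phi n α a := by rw [rpow_mul_phi ha]; positivity
  calc phiTail n α a
      ≤ ∫⁻ s in Ioi a, ENNReal.ofReal (a ^ (1 - α / n) * phi n α a * s ^ (α / n - 2)) := by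
        refine setLIntegral_mono' measurableSet_Ioi fun s has => ENNReal.ofReal_le_ofReal ?_
        have hs : 0 < s := ha.trans has
        calc phi n α s / s = s ^ (1 - α / n) * phi n α s * s ^ (α / n - 2) := by
              rw [mul_right_comm, ← rpow_add hs, show 1 - α / n + (α / n - 2) = -1 by ring,
                rpow_neg_one, div_eq_mul_inv, mul_comm]
          _ ≤ a ^ (1 - α / n) * phi n α a * s ^ (α / n - 2) := by
              gcongr ?_ * _; exact rpow_mul_phi_le_rpow_mul_phi hα ha (le_of_lt has)
    _ = ENNReal.ofReal (1 - α / n)⁻¹ * ENNReal.ofReal (phi n α a) := by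
        rw [lintegral_Ioi_ofReal_mul_rpow hphi (by linarith) ha,
          ← ENNReal.ofReal_mul (inv_nonneg.2 (by linarith))]
        congr 1
        have hcancel : a ^ (1 - α / n) * a ^ (α / n - 2 + 1) = 1 := by
          rw [← rpow_add ha]; ring_nf; exact rpow_zero a
        rw [show -(α / n - 2 + 1) = 1 - α / n by ring]
        generalize α / n = r at hcancel ⊢
        rw [div_eq_mul_inv]
        linear_combination (phi n α a * (1 - r)⁻¹) * hcancel

lemma Hop_Pop_eq {f : ℝ → ℝ≥0∞} (hf : Measurable f) {t : ℝ} (ht : 0 ≤ t) :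
    Hop n α (Pop f) t
      = (∫⁻ u in Ioo 0 t, f u) * phiTail n α t + ∫⁻ u in Ioi t, f u * phiTail n α u := by
  unfold Hop phiTail
  rw [← lintegral_Ioi_mul_lintegral_Ioo_eq_add (g := fun s => ENNReal.ofReal (phi n α s / s)) hf
    (measurable_phi.div measurable_id).ennreal_ofReal ht]
  refine setLIntegral_congr_fun measurableSet_Ioi fun s hs => ?_
  rw [Pop, ENNReal.ofReal_div_of_pos (ht.trans_lt hs), div_eq_mul_inv, div_eq_mul_inv]
  ring

lemma Rop_add_Hop_le_Hop_Pop (hα : 0 ≤ α / n) {f : ℝ → ℝ≥0∞} (hf : Measurable f) {t : ℝ}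
    (ht : 0 < t) : Rop n α f t + Hop n α f t ≤ Hop n α (Pop f) t := by
  rw [Hop_Pop_eq hf ht.le, Rop, Hop, mul_comm]
  gcongr ?_ + ?_
  · gcongr
    exact ofReal_phi_le_phiTail hα ht
  · refine setLIntegral_mono' measurableSet_Ioi fun u hu => ?_
    gcongr
    exact ofReal_phi_le_phiTail hα (ht.trans hu)

lemma Hop_Pop_le (hα : 0 ≤ α / n) (hα1 : α / n < 1) {f : ℝ → ℝ≥0∞} (hf : Measurable f) {t : ℝ}
    (ht : 0 < t) :
    Hop n α (Pop f) t ≤ ENNReal.ofReal (1 - α / n)⁻¹ * (Rop n α f t + Hop n α f t) := by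
  rw [Hop_Pop_eq hf ht.le, Rop, Hop, mul_add]
  gcongr ?_ + ?_
  · calc (∫⁻ u in Ioo 0 t, f u) * phiTail n α t
        ≤ (∫⁻ u in Ioo 0 t, f u) *
            (ENNReal.ofReal (1 - α / n)⁻¹ * ENNReal.ofReal (phi n α t)) := by
          gcongr
          exact phiTail_le hα hα1 ht
      _ = _ := by ring
  · rw [← lintegral_const_mul' _ _ ENNReal.ofReal_ne_top]
    refine setLIntegral_mono' measurableSet_Ioi fun u hu => ?_
    calc f u * phiTail n α u
        ≤ f u * (ENNReal.ofReal (1 - α / n)⁻¹ * ENNReal.ofReal (phi n α u)) := by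
          gcongr
          exact phiTail_le hα hα1 (ht.trans hu)
      _ = _ := by ring

end phiTail

theorem stmt1_general (n : ℕ) (α : ℝ) (hα0 : 0 ≤ α) (hαn : α < n)
    (f : ℝ → ℝ≥0∞) (hf : Measurable f) (t : ℝ) (ht : 0 < t) :
    Rop n α f t + Hop n α f t ≤ Hop n α (Pop f) t ∧
      Hop n α (Pop f) t ≤
        ENNReal.ofReal ((n : ℝ) / (n - α)) * (Rop n α f t + Hop n α f t) := by
  have hn : (0 : ℝ) < n := hα0.trans_lt hαn
  have hα : 0 ≤ α / n := div_nonneg hα0 hn.le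
  have hα1 : α / n < 1 := (div_lt_one hn).2 hαn
  have hconst : (n : ℝ) / (n - α) = (1 - α / n)⁻¹ := by field_simp
  exact ⟨Rop_add_Hop_le_Hop_Pop hα hf ht, hconst ▸ Hop_Pop_le hα hα1 hf ht⟩

theorem stmt1 (n : ℕ) (hn : 2 ≤ n) (α : ℝ) (hα0 : 0 ≤ α) (hαn : α < n)
    (f : ℝ → ℝ≥0∞) (hf : Measurable f) (t : ℝ) (ht : 0 < t) :
    Rop n α f t + Hop n α f t ≤ Hop n α (Pop f) t ∧
      Hop n α (Pop f) t ≤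
        ENNReal.ofReal ((n : ℝ) / (n - α)) * (Rop n α f t + Hop n α f t) :=
  stmt1_general n α hα0 hαn f hf t ht
end

section
/- For all nonnegative measurable f, g on (0,∞), every α ∈ [0,n), and every j ∈ ℕ₀: ((n−α)/n)^j ∫_0^∞ (H_α∘P)^j f · g ≤ ∫_0^∞ f · (H_α∘P)^j g ≤ (n/(n−α))^j ∫_0^∞ (H_α∘P)^j f · g. (Here (H_α∘P)^j denotes the j-th iterate.) -/
/-! `H_α ∘ P` is self-adjoint for the pairing `∫_0^∞ f g`: by Fubini, with `F, G` the primitives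
of `f, g` from `0`, `∫_0^∞ (H_α P f) g = ∫_0^∞ F(s) G(s) φ_α(s) / s ds`, which is symmetric in
`f` and `g`. Hence so are all iterates, the two integrals in the theorem coincide, and the
constants `((n - α) / n) ^ j ≤ 1 ≤ (n / (n - α)) ^ j` finish the proof. -/

open MeasureTheory Set Real
open scoped ENNReal

/-- The composition `H_α ∘ P`. -/
noncomputable def HP (n : ℕ) (α : ℝ) (f : ℝ → ℝ≥0∞) : ℝ → ℝ≥0∞ :=
  Hop n α (Pop f)

lemma measurable_Pop (f : ℝ → ℝ≥0∞) : Measurable (Pop f) :=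
  (Monotone.measurable fun _ _ hst => lintegral_mono_set (Ioo_subset_Ioo_right hst)).div
    ENNReal.measurable_ofReal

lemma measurable_Hop (n : ℕ) (α : ℝ) (f : ℝ → ℝ≥0∞) : Measurable (Hop n α f) :=
  Antitone.measurable fun _ _ hst => lintegral_mono_set (Ioi_subset_Ioi hst)

lemma measurable_HP (n : ℕ) (α : ℝ) (f : ℝ → ℝ≥0∞) : Measurable (HP n α f) :=
  measurable_Hop n α (Pop f)

lemma setLIntegral_Ioi_lintegral_Ioi_mul (μ : Measure ℝ) [SFinite μ] (a : ℝ)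
    {h g : ℝ → ℝ≥0∞} (hh : Measurable h) (hg : Measurable g) :
    ∫⁻ t in Ioi a, (∫⁻ s in Ioi t, h s ∂μ) * g t ∂μ =
      ∫⁻ s in Ioi a, h s * ∫⁻ t in Ioo a s, g t ∂μ ∂μ := by
  set k : ℝ → ℝ → ℝ≥0∞ := fun t s => (Ioi t).indicator (fun s => h s * g t) s
  have hk : Measurable (Function.uncurry k) := by
    have hk_eq : Function.uncurry k =
        {p : ℝ × ℝ | p.1 < p.2}.indicator (fun p => h p.2 * g p.1) := by
      ext ⟨t, s⟩
      simp [k, indicator_apply]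
    rw [hk_eq]
    exact ((hh.comp measurable_snd).mul (hg.comp measurable_fst)).indicator
      (measurableSet_lt measurable_fst measurable_snd)
  have hleft : EqOn (fun t => (∫⁻ s in Ioi t, h s ∂μ) * g t)
      (fun t => ∫⁻ s in Ioi a, k t s ∂μ) (Ioi a) := by
    intro t ht
    simp only [k]
    rw [setLIntegral_indicator measurableSet_Ioi, Ioi_inter_Ioi, sup_eq_left.2 (le_of_lt ht),
      lintegral_mul_const _ hh]
  have hright (s : ℝ) : h s * ∫⁻ t in Ioo a s, g t ∂μ = ∫⁻ t in Ioi a, k t s ∂μ := by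
    have hk_section : (fun t => k t s) = (Iio s).indicator (fun t => h s * g t) := by
      ext t
      simp [k, indicator_apply]
    rw [hk_section, setLIntegral_indicator measurableSet_Iio, Iio_inter_Ioi,
      lintegral_const_mul _ hg]
  rw [setLIntegral_congr_fun measurableSet_Ioi hleft,
    setLIntegral_congr_fun measurableSet_Ioi fun s _ => hright s]
  exact lintegral_lintegral_swap hk.aemeasurable

lemma setLIntegral_HP_mul (n : ℕ) (α : ℝ) (f : ℝ → ℝ≥0∞) {g : ℝ → ℝ≥0∞}
    (hg : Measurable g) :
    ∫⁻ t in Ioi (0 : ℝ), HP n α f t * g t =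
      ∫⁻ s in Ioi (0 : ℝ), (∫⁻ t in Ioo 0 s, f t) * (∫⁻ t in Ioo 0 s, g t) *
        (ENNReal.ofReal (phi n α s) / ENNReal.ofReal s) := by
  have hPφ : Measurable fun s => Pop f s * ENNReal.ofReal (phi n α s) :=
    (measurable_Pop f).mul (ENNReal.measurable_ofReal.comp
      ((measurable_id.pow_const _).min measurable_inv))
  unfold HP Hop
  rw [setLIntegral_Ioi_lintegral_Ioi_mul volume 0 hPφ hg]
  congr 1 with s
  simp only [Pop, div_eq_mul_inv]
  ring

lemma setLIntegral_HP_mul_comm (n : ℕ) (α : ℝ) {f g : ℝ → ℝ≥0∞} (hf : Measurable f)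
    (hg : Measurable g) :
    ∫⁻ t in Ioi (0 : ℝ), HP n α f t * g t = ∫⁻ t in Ioi (0 : ℝ), f t * HP n α g t := by
  simp_rw [mul_comm (f _) (HP n α g _)]
  rw [setLIntegral_HP_mul n α f hg, setLIntegral_HP_mul n α g hf]
  simp_rw [mul_comm (∫⁻ t in Ioo 0 _, f t)]

lemma lintegral_iterate_mul_comm {X : Type*} [MeasurableSpace X] {μ : Measure X}
    {T : (X → ℝ≥0∞) → X → ℝ≥0∞} (hTm : ∀ f, Measurable f → Measurable (T f))
    (hT : ∀ f g, Measurable f → Measurable g → ∫⁻ x, T f x * g x ∂μ = ∫⁻ x, f x * T g x ∂μ)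
    (j : ℕ) {f g : X → ℝ≥0∞} (hf : Measurable f) (hg : Measurable g) :
    ∫⁻ x, T^[j] f x * g x ∂μ = ∫⁻ x, f x * T^[j] g x ∂μ := by
  induction j generalizing f with
  | zero => rfl
  | succ k ih =>
    have hTkg : Measurable (T^[k] g) := Function.Iterate.rec Measurable hg hTm k
    rw [Function.iterate_succ_apply, ih (hTm f hf), hT f _ hf hTkg,
      ← Function.iterate_succ_apply' T]

theorem stmt2_general (n : ℕ) (α : ℝ) (hα0 : 0 ≤ α) (hαn : α < n) (j : ℕ)
    (f g : ℝ → ℝ≥0∞) (hf : Measurable f) (hg : Measurable g) :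
    ENNReal.ofReal ((((n : ℝ) - α) / n) ^ j) *
        (∫⁻ t in Ioi (0 : ℝ), (HP n α)^[j] f t * g t) ≤
      (∫⁻ t in Ioi (0 : ℝ), f t * (HP n α)^[j] g t) ∧
    (∫⁻ t in Ioi (0 : ℝ), f t * (HP n α)^[j] g t) ≤
      ENNReal.ofReal (((n : ℝ) / ((n : ℝ) - α)) ^ j) *
        ∫⁻ t in Ioi (0 : ℝ), (HP n α)^[j] f t * g t := by
  have hn : (0 : ℝ) < n := hα0.trans_lt hαn
  have hlower : ENNReal.ofReal ((((n : ℝ) - α) / n) ^ j) ≤ 1 :=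
    ENNReal.ofReal_le_one.2 <| pow_le_one₀ (div_nonneg (by linarith) hn.le)
      ((div_le_one hn).2 (by linarith))
  have hupper : 1 ≤ ENNReal.ofReal (((n : ℝ) / ((n : ℝ) - α)) ^ j) :=
    ENNReal.one_le_ofReal.2 <| one_le_pow₀ ((le_div_iff₀ (by linarith)).2 (by linarith))
  rw [lintegral_iterate_mul_comm (fun f _ => measurable_HP n α f)
    (fun _ _ hf hg => setLIntegral_HP_mul_comm n α hf hg) j hf hg]
  exact ⟨mul_le_of_le_one_left zero_le hlower, le_mul_of_one_le_left zero_le hupper⟩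

theorem stmt2 (n : ℕ) (hn : 2 ≤ n) (α : ℝ) (hα0 : 0 ≤ α) (hαn : α < n) (j : ℕ)
    (f g : ℝ → ℝ≥0∞) (hf : Measurable f) (hg : Measurable g) :
    ENNReal.ofReal ((((n : ℝ) - α) / n) ^ j) *
        (∫⁻ t in Ioi (0 : ℝ), (HP n α)^[j] f t * g t) ≤
      (∫⁻ t in Ioi (0 : ℝ), f t * (HP n α)^[j] g t) ∧
    (∫⁻ t in Ioi (0 : ℝ), f t * (HP n α)^[j] g t) ≤
      ENNReal.ofReal (((n : ℝ) / ((n : ℝ) - α)) ^ j) *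
        ∫⁻ t in Ioi (0 : ℝ), (HP n α)^[j] f t * g t :=
  stmt2_general n α hα0 hαn j f g hf hg
end

section
/- Let V(r) = n ω_n ∫_0^r (sinh t)^{n−1} dt, where ω_n is the volume of the Euclidean unit ball, and let ϱ be its inverse. Then sinh(ϱ(t))^{1−n} ≍ min{t^{−1+1/n}, t^{−1}} for all t ∈ (0,∞), with constants depending only on n; in particular lim_{t→0⁺} sinh(ϱ(t))^{1−n}/t^{−1+1/n} = ω_n^{(n−1)/n} and lim_{t→∞} sinh(ϱ(t))^{1−n}/t^{−1} = nω_n/(n−1). -/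
/-!
Write `m = n - 1` and `s = sinh r`. Every estimate on `∫₀ʳ sinh ^ m` comes from comparing the
integrand with the exact derivative `(sinh ^ (k + 1) / (k + 1))' = sinh ^ k * cosh`:
`s ^ n / (n cosh r) ≤ ∫₀ʳ sinh ^ m ≤ min (s ^ n / n) (s ^ m / m)` and
`∫₀ʳ sinh ^ m ≥ s ^ m / m - s ^ (m - 1)`. Hence `V r / s ^ n → ω` as `r → 0⁺` and
`V r / s ^ m → n ω / m` as `r → ∞`; with `cosh ≤ 1 + sinh`, the first lower bound gives
`ω s ^ n ≤ (1 + s) V r`, which controls `s ^ m` by `V r ^ (m / n)` for `s ≤ 1` and by `V r`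
for `s ≥ 1`. Since `V` is strictly increasing, `r = ϱ t` tends to `0⁺` resp. `∞` with `t`.
-/

open MeasureTheory Set Real Filter Topology intervalIntegral

lemma sub_le_integral_of_hasDerivAt_of_le {f g g' : ℝ → ℝ} {a b : ℝ} (hab : a ≤ b)
    (hg : ∀ x, HasDerivAt g (g' x) x) (hf : Continuous f) (h : ∀ x ∈ Ioo a b, g' x ≤ f x) :
    g b - g a ≤ ∫ x in a..b, f x :=
  sub_le_integral_of_hasDeriv_right_of_le hab (fun x _ => (hg x).continuousAt.continuousWithinAt)
    (fun x _ => (hg x).hasDerivWithinAt) hf.integrableOn_Icc h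

lemma integral_le_sub_of_hasDerivAt_of_le {f g g' : ℝ → ℝ} {a b : ℝ} (hab : a ≤ b)
    (hg : ∀ x, HasDerivAt g (g' x) x) (hf : Continuous f) (h : ∀ x ∈ Ioo a b, f x ≤ g' x) :
    ∫ x in a..b, f x ≤ g b - g a :=
  integral_le_sub_of_hasDeriv_right_of_le hab (fun x _ => (hg x).continuousAt.continuousWithinAt)
    (fun x _ => (hg x).hasDerivWithinAt) hf.integrableOn_Icc h

lemma hasDerivAt_sinh_pow_succ_div (m : ℕ) (x : ℝ) :
    HasDerivAt (fun x => sinh x ^ (m + 1) / (m + 1)) (sinh x ^ m * cosh x) x := by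
  refine (((hasDerivAt_sinh x).pow (m + 1)).div_const ((m : ℝ) + 1)).congr_deriv ?_
  push_cast
  field_simp

section IntegralSinhPow

variable (m : ℕ) {r : ℝ}

lemma integral_sinh_pow_le_sinh_pow_succ_div (hr : 0 ≤ r) :
    ∫ t in (0 : ℝ)..r, sinh t ^ m ≤ sinh r ^ (m + 1) / (m + 1) := by
  simpa using integral_le_sub_of_hasDerivAt_of_le hr (hasDerivAt_sinh_pow_succ_div m)
    (by fun_prop) fun x hx =>
      le_mul_of_one_le_right (pow_nonneg (sinh_nonneg_iff.2 hx.1.le) m) (one_le_cosh x)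

lemma integral_sinh_pow_succ_le_sinh_pow_succ_div (hr : 0 ≤ r) :
    ∫ t in (0 : ℝ)..r, sinh t ^ (m + 1) ≤ sinh r ^ (m + 1) / (m + 1) := by
  simpa using integral_le_sub_of_hasDerivAt_of_le hr (hasDerivAt_sinh_pow_succ_div m)
    (by fun_prop) fun x hx => by
      rw [pow_succ]
      exact mul_le_mul_of_nonneg_left (sinh_lt_cosh x).le (pow_nonneg (sinh_nonneg_iff.2 hx.1.le) m)

lemma sinh_pow_succ_div_le_cosh_mul_integral_sinh_pow (hr : 0 ≤ r) :
    sinh r ^ (m + 1) / (m + 1) ≤ cosh r * ∫ t in (0 : ℝ)..r, sinh t ^ m := by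
  rw [← intervalIntegral.integral_const_mul]
  simpa using sub_le_integral_of_hasDerivAt_of_le hr (hasDerivAt_sinh_pow_succ_div m)
    (f := fun t => cosh r * sinh t ^ m) (by fun_prop) fun x hx => by
      rw [mul_comm]
      refine mul_le_mul_of_nonneg_right ?_ (pow_nonneg (sinh_nonneg_iff.2 hx.1.le) m)
      exact cosh_le_cosh.2 (by rw [abs_of_pos hx.1, abs_of_nonneg hr]; exact hx.2.le)

/-- The defect `∫₀ʳ sinh ^ m (cosh - sinh)` is at most
`sinh r ^ m * ∫₀ʳ exp (-t) ≤ sinh r ^ m`. -/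
lemma sinh_pow_succ_div_sub_sinh_pow_le_integral_sinh_pow_succ (hr : 0 ≤ r) :
    sinh r ^ (m + 1) / (m + 1) - sinh r ^ m ≤ ∫ t in (0 : ℝ)..r, sinh t ^ (m + 1) := by
  have hg : ∀ x, HasDerivAt (fun x => sinh x ^ (m + 1) / (m + 1) - sinh r ^ m * (sinh x - cosh x))
      (sinh x ^ m * cosh x - sinh r ^ m * (cosh x - sinh x)) x := fun x =>
    (hasDerivAt_sinh_pow_succ_div m x).sub
      (((hasDerivAt_sinh x).sub (hasDerivAt_cosh x)).const_mul _)
  have key := sub_le_integral_of_hasDerivAt_of_le hr hg (f := fun t => sinh t ^ (m + 1))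
    (by fun_prop) fun x hx => by
      have hmono : sinh x ^ m ≤ sinh r ^ m :=
        pow_le_pow_left₀ (sinh_nonneg_iff.2 hx.1.le) (sinh_le_sinh.2 hx.2.le) m
      rw [pow_succ]
      nlinarith [mul_nonneg (sub_nonneg.2 hmono) (sub_nonneg.2 (sinh_lt_cosh x).le)]
  simp only [sinh_sub_cosh, mul_neg, sub_neg_eq_add, sinh_zero, cosh_zero, ne_eq,
    Nat.add_eq_zero_iff, one_ne_zero, and_false, not_false_eq_true, zero_pow, zero_div, zero_sub,
    mul_one, zero_add] at key
  nlinarith [pow_nonneg (sinh_nonneg_iff.2 hr) m, exp_pos (-r)]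

lemma strictMonoOn_integral_sinh_pow :
    StrictMonoOn (fun r => ∫ t in (0 : ℝ)..r, sinh t ^ m) (Ici 0) := by
  intro a ha b _ hab
  have hcont : Continuous fun t => sinh t ^ m := by fun_prop
  have hpos : 0 < ∫ t in a..b, sinh t ^ m :=
    intervalIntegral_pos_of_pos_on (hcont.intervalIntegrable (μ := volume) a b)
      (fun x hx => pow_pos (sinh_pos_iff.2 (lt_of_le_of_lt ha hx.1)) m) hab
  have := integral_interval_sub_left (hcont.intervalIntegrable (μ := volume) 0 b)
    (hcont.intervalIntegrable 0 a)
  dsimp only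
  linarith

lemma tendsto_integral_sinh_pow_div_sinh_pow_succ_nhdsGT_zero :
    Tendsto (fun r => (∫ t in (0 : ℝ)..r, sinh t ^ m) / sinh r ^ (m + 1)) (𝓝[>] 0)
      (𝓝 (1 / (m + 1))) := by
  have hcosh : Tendsto (fun r => 1 / ((m + 1) * cosh r)) (𝓝[>] 0) (𝓝 (1 / (m + 1))) := by
    simpa using ((continuous_cosh.tendsto 0).mono_left nhdsWithin_le_nhds).const_mul ((m : ℝ) + 1)
      |>.inv₀ (by positivity)
  refine tendsto_of_tendsto_of_tendsto_of_le_of_le' hcosh tendsto_const_nhds ?_ ?_ <;>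
    filter_upwards [self_mem_nhdsWithin] with r (hr : 0 < r)
  · have hs : 0 < sinh r ^ (m + 1) := pow_pos (sinh_pos_iff.2 hr) _
    rw [le_div_iff₀ hs]
    have := sinh_pow_succ_div_le_cosh_mul_integral_sinh_pow m hr.le
    rw [div_le_iff₀ (by positivity)] at this
    field_simp
    linarith
  · rw [div_le_iff₀ (pow_pos (sinh_pos_iff.2 hr) _)]
    have := integral_sinh_pow_le_sinh_pow_succ_div m hr.le
    field_simp at this ⊢
    linarith

lemma tendsto_integral_sinh_pow_succ_div_sinh_pow_succ_atTop :
    Tendsto (fun r => (∫ t in (0 : ℝ)..r, sinh t ^ (m + 1)) / sinh r ^ (m + 1)) atTop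
      (𝓝 (1 / (m + 1))) := by
  have hsinh : Tendsto sinh atTop atTop :=
    tendsto_atTop_mono' _ ((eventually_ge_atTop 0).mono fun _ => self_le_sinh_iff.2) tendsto_id
  have hlow : Tendsto (fun r => 1 / (m + 1) - (sinh r)⁻¹) atTop (𝓝 (1 / (m + 1))) := by
    simpa using tendsto_const_nhds.sub hsinh.inv_tendsto_atTop
  refine tendsto_of_tendsto_of_tendsto_of_le_of_le' hlow tendsto_const_nhds ?_ ?_ <;>
    filter_upwards [eventually_gt_atTop 0] with r hr
  · have hs : 0 < sinh r := sinh_pos_iff.2 hr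
    rw [le_div_iff₀ (pow_pos hs _)]
    have := sinh_pow_succ_div_sub_sinh_pow_le_integral_sinh_pow_succ m hr.le
    calc (1 / (m + 1) - (sinh r)⁻¹) * sinh r ^ (m + 1)
        = sinh r ^ (m + 1) / (m + 1) - sinh r ^ m := by field_simp; ring
      _ ≤ _ := this
  · rw [div_le_iff₀ (pow_pos (sinh_pos_iff.2 hr) _)]
    have := integral_sinh_pow_succ_le_sinh_pow_succ_div m hr.le
    field_simp at this ⊢
    linarith

end IntegralSinhPow

lemma inv_le_max_mul_min_inv {X u v a b : ℝ} (hX : 0 < X) (hu : 0 < u) (hv : 0 < v)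
    (hua : u ≤ a * X) (hvb : v ≤ b * X) : X⁻¹ ≤ max a b * min u⁻¹ v⁻¹ := by
  have hau : X⁻¹ ≤ a * u⁻¹ := by
    rw [← div_eq_mul_inv, le_div_iff₀ hu, inv_mul_le_iff₀ hX]; linarith
  have hbv : X⁻¹ ≤ b * v⁻¹ := by
    rw [← div_eq_mul_inv, le_div_iff₀ hv, inv_mul_le_iff₀ hX]; linarith
  rcases le_total u⁻¹ v⁻¹ with h | h
  · rw [min_eq_left h]
    exact hau.trans (mul_le_mul_of_nonneg_right (le_max_left a b) (inv_pos.2 hu).le)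
  · rw [min_eq_right h]
    exact hbv.trans (mul_le_mul_of_nonneg_right (le_max_right a b) (inv_pos.2 hv).le)

lemma inv_max_mul_min_inv_le {X u v a b : ℝ} (hX : 0 < X) (hu : 0 < u) (hv : 0 < v)
    (ha : 0 < a) (hb : 0 < b) (h : X ≤ a * u ∨ X ≤ b * v) :
    (max a b)⁻¹ * min u⁻¹ v⁻¹ ≤ X⁻¹ := by
  rcases h with h | h
  · calc (max a b)⁻¹ * min u⁻¹ v⁻¹ ≤ a⁻¹ * u⁻¹ := by
          gcongr
          · exact le_max_left a b
          · exact min_le_left _ _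
      _ = (a * u)⁻¹ := (mul_inv a u).symm
      _ ≤ X⁻¹ := inv_anti₀ hX h
  · calc (max a b)⁻¹ * min u⁻¹ v⁻¹ ≤ b⁻¹ * v⁻¹ := by
          gcongr
          · exact le_max_right a b
          · exact min_le_right _ _
      _ = (b * v)⁻¹ := (mul_inv b v).symm
      _ ≤ X⁻¹ := inv_anti₀ hX h

section RpowDivSucc

variable {m : ℕ} {s t ω : ℝ}

lemma pow_succ_rpow_div_succ (hs : 0 ≤ s) : (s ^ (m + 1)) ^ ((m : ℝ) / (m + 1)) = s ^ m := by
  rw [← rpow_natCast, ← rpow_mul hs, ← rpow_natCast]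
  congr 1
  push_cast
  field_simp

lemma rpow_div_succ_le_of_le_mul_pow_succ (hs : 0 ≤ s) (ht : 0 ≤ t) (hω : 0 ≤ ω)
    (h : t ≤ ω * s ^ (m + 1)) :
    t ^ ((m : ℝ) / (m + 1)) ≤ ω ^ ((m : ℝ) / (m + 1)) * s ^ m := by
  calc t ^ ((m : ℝ) / (m + 1)) ≤ (ω * s ^ (m + 1)) ^ ((m : ℝ) / (m + 1)) :=
        rpow_le_rpow ht h (by positivity)
    _ = ω ^ ((m : ℝ) / (m + 1)) * s ^ m := by
        rw [mul_rpow hω (by positivity), pow_succ_rpow_div_succ hs]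

lemma pow_le_rpow_div_succ_or_le_of_mul_pow_succ_le (hs : 0 ≤ s) (ht : 0 ≤ t) (hω : 0 < ω)
    (h : ω * s ^ (m + 1) ≤ (1 + s) * t) :
    s ^ m ≤ (2 / ω) ^ ((m : ℝ) / (m + 1)) * t ^ ((m : ℝ) / (m + 1)) ∨
      s ^ m ≤ 2 / ω * t := by
  rcases le_total s 1 with hs1 | hs1
  · left
    have : s ^ (m + 1) ≤ 2 / ω * t := by
      rw [div_mul_eq_mul_div, le_div_iff₀ hω]; nlinarith
    calc s ^ m = (s ^ (m + 1)) ^ ((m : ℝ) / (m + 1)) := (pow_succ_rpow_div_succ hs).symm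
      _ ≤ (2 / ω * t) ^ ((m : ℝ) / (m + 1)) :=
          rpow_le_rpow (by positivity) this (by positivity)
      _ = _ := mul_rpow (by positivity) ht
  · right
    rw [div_mul_eq_mul_div, le_div_iff₀ hω]
    rw [pow_succ] at h
    nlinarith [pow_nonneg hs m]

end RpowDivSucc

/-- The paper's `V` for `n = m + 1`: the volume of a geodesic ball of radius `r` in hyperbolic
`n`-space, `ω` being the volume of the Euclidean unit `n`-ball. -/
noncomputable def hyperbolicBallVolume (m : ℕ) (ω r : ℝ) : ℝ :=
  (m + 1) * ω * ∫ t in (0 : ℝ)..r, sinh t ^ m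

section HyperbolicBallVolume

variable {m : ℕ} {ω r : ℝ}

lemma hyperbolicBallVolume_zero : hyperbolicBallVolume m ω 0 = 0 := by
  simp [hyperbolicBallVolume]

lemma strictMonoOn_hyperbolicBallVolume (hω : 0 < ω) :
    StrictMonoOn (hyperbolicBallVolume m ω) (Ici 0) := fun _ ha _ hb hab =>
  mul_lt_mul_of_pos_left (strictMonoOn_integral_sinh_pow m ha hb hab) (by positivity)

lemma hyperbolicBallVolume_le_mul_sinh_pow_succ (hω : 0 ≤ ω) (hr : 0 ≤ r) :
    hyperbolicBallVolume m ω r ≤ ω * sinh r ^ (m + 1) := by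
  calc hyperbolicBallVolume m ω r ≤ (m + 1) * ω * (sinh r ^ (m + 1) / (m + 1)) :=
        mul_le_mul_of_nonneg_left (integral_sinh_pow_le_sinh_pow_succ_div m hr) (by positivity)
    _ = ω * sinh r ^ (m + 1) := by field_simp

lemma hyperbolicBallVolume_le_mul_sinh_pow (hm : m ≠ 0) (hω : 0 ≤ ω) (hr : 0 ≤ r) :
    hyperbolicBallVolume m ω r ≤ (m + 1) * ω / m * sinh r ^ m := by
  obtain ⟨k, rfl⟩ := Nat.exists_eq_succ_of_ne_zero hm
  calc hyperbolicBallVolume (k + 1) ω r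
      ≤ ((k : ℝ) + 1 + 1) * ω * (sinh r ^ (k + 1) / (k + 1)) := by
        rw [hyperbolicBallVolume]
        push_cast
        gcongr
        exact integral_sinh_pow_succ_le_sinh_pow_succ_div k hr
    _ = _ := by push_cast; field_simp

lemma mul_sinh_pow_succ_le_one_add_sinh_mul_hyperbolicBallVolume (hω : 0 ≤ ω) (hr : 0 ≤ r) :
    ω * sinh r ^ (m + 1) ≤ (1 + sinh r) * hyperbolicBallVolume m ω r := by
  have hcosh : cosh r ≤ 1 + sinh r := by
    have := cosh_sub_sinh r ▸ exp_le_one_iff.2 (neg_nonpos.2 hr)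
    linarith
  have hV : 0 ≤ ∫ t in (0 : ℝ)..r, sinh t ^ m :=
    integral_nonneg hr fun t ht => pow_nonneg (sinh_nonneg_iff.2 ht.1) m
  calc ω * sinh r ^ (m + 1) = (m + 1) * ω * (sinh r ^ (m + 1) / (m + 1)) := by field_simp
    _ ≤ (m + 1) * ω * (cosh r * ∫ t in (0 : ℝ)..r, sinh t ^ m) :=
        mul_le_mul_of_nonneg_left (sinh_pow_succ_div_le_cosh_mul_integral_sinh_pow m hr)
          (by positivity)
    _ ≤ (m + 1) * ω * ((1 + sinh r) * ∫ t in (0 : ℝ)..r, sinh t ^ m) := by gcongr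
    _ = _ := by rw [hyperbolicBallVolume]; ring

lemma tendsto_hyperbolicBallVolume_div_sinh_pow_succ_nhdsGT_zero :
    Tendsto (fun r => hyperbolicBallVolume m ω r / sinh r ^ (m + 1)) (𝓝[>] 0) (𝓝 ω) := by
  have := (tendsto_integral_sinh_pow_div_sinh_pow_succ_nhdsGT_zero m).const_mul ((m + 1) * ω)
  rw [show (m + 1) * ω * (1 / (m + 1)) = ω by field_simp] at this
  simpa only [hyperbolicBallVolume, mul_div_assoc] using this

lemma tendsto_hyperbolicBallVolume_div_sinh_pow_atTop (hm : m ≠ 0) :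
    Tendsto (fun r => hyperbolicBallVolume m ω r / sinh r ^ m) atTop
      (𝓝 ((m + 1) * ω / m)) := by
  obtain ⟨k, rfl⟩ := Nat.exists_eq_succ_of_ne_zero hm
  have := (tendsto_integral_sinh_pow_succ_div_sinh_pow_succ_atTop k).const_mul
    (((k : ℝ) + 1 + 1) * ω)
  rw [show ((k : ℝ) + 1 + 1) * ω * (1 / (k + 1)) = (k + 1 + 1) * ω / (k + 1) by ring] at this
  simpa only [hyperbolicBallVolume, mul_div_assoc, Nat.cast_succ] using this

end HyperbolicBallVolume

section RightInvOn

variable {V ϱ : ℝ → ℝ}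

lemma mapsTo_Ioi_of_rightInvOn (hV0 : V 0 = 0) (hmaps : MapsTo ϱ (Ioi 0) (Ici 0))
    (hinv : RightInvOn ϱ V (Ioi 0)) : MapsTo ϱ (Ioi 0) (Ioi 0) := fun t ht => by
  refine lt_of_le_of_ne (mem_Ici.1 (hmaps ht)) fun h0 => ?_
  have := hinv ht
  rw [← h0, hV0] at this
  exact (ne_of_lt ht) this

lemma tendsto_nhdsGT_zero_of_rightInvOn (hV : StrictMonoOn V (Ici 0)) (hV0 : V 0 = 0)
    (hmaps : MapsTo ϱ (Ioi 0) (Ici 0)) (hinv : RightInvOn ϱ V (Ioi 0)) :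
    Tendsto ϱ (𝓝[>] 0) (𝓝[>] 0) := by
  refine ((nhdsGT_basis 0).tendsto_iff (nhdsGT_basis 0)).2 fun ε hε => ?_
  have hVε : 0 < V ε := hV0 ▸ hV self_mem_Ici hε.le hε
  refine ⟨V ε, hVε, fun t ht => ⟨mapsTo_Ioi_of_rightInvOn hV0 hmaps hinv ht.1, ?_⟩⟩
  by_contra! h
  have := hV.monotoneOn hε.le (hmaps ht.1) h
  rw [hinv ht.1] at this
  exact (lt_irrefl _ (ht.2.trans_le this))

lemma tendsto_atTop_of_rightInvOn (hV : MonotoneOn V (Ici 0)) (hmaps : MapsTo ϱ (Ioi 0) (Ici 0))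
    (hinv : RightInvOn ϱ V (Ioi 0)) : Tendsto ϱ atTop atTop := by
  refine tendsto_atTop.2 fun b => ?_
  filter_upwards [eventually_gt_atTop 0, eventually_gt_atTop (V (max b 0))] with t ht hbt
  by_contra! h
  have := hV (hmaps ht) (le_max_right b 0) (h.le.trans (le_max_left b 0))
  rw [hinv ht] at this
  exact lt_irrefl _ (hbt.trans_le this)

end RightInvOn

lemma rpow_one_sub_natCast_succ (x : ℝ) (m : ℕ) :
    x ^ ((1 : ℝ) - ((m + 1 : ℕ) : ℝ)) = (x ^ m)⁻¹ := by
  rw [show (1 : ℝ) - ((m + 1 : ℕ) : ℝ) = ((-m : ℤ) : ℝ) by push_cast; ring, rpow_intCast,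
    zpow_neg, zpow_natCast]

lemma rpow_neg_one_add_one_div_natCast_succ {x : ℝ} (hx : 0 ≤ x) (m : ℕ) :
    x ^ (-1 + 1 / ((m + 1 : ℕ) : ℝ)) = (x ^ ((m : ℝ) / (m + 1)))⁻¹ := by
  rw [← rpow_neg hx]
  congr 1
  push_cast
  field_simp
  ring

section InverseHyperbolicBallVolume

variable {m : ℕ} {ω : ℝ} {ϱ : ℝ → ℝ}

lemma exists_bounds_sinh_rpow_of_rightInvOn (hm : m ≠ 0) (hω : 0 < ω)
    (hmaps : MapsTo ϱ (Ioi 0) (Ici 0)) (hinv : RightInvOn ϱ (hyperbolicBallVolume m ω) (Ioi 0)) :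
    ∃ c C : ℝ, 0 < c ∧ 0 < C ∧ ∀ t : ℝ, 0 < t →
      c * min (t ^ (-1 + 1 / ((m + 1 : ℕ) : ℝ))) t⁻¹ ≤
        sinh (ϱ t) ^ ((1 : ℝ) - (m + 1 : ℕ)) ∧
      sinh (ϱ t) ^ ((1 : ℝ) - (m + 1 : ℕ)) ≤
        C * min (t ^ (-1 + 1 / ((m + 1 : ℕ) : ℝ))) t⁻¹ := by
  refine ⟨(max ((2 / ω) ^ ((m : ℝ) / (m + 1))) (2 / ω))⁻¹,
    max (ω ^ ((m : ℝ) / (m + 1))) ((m + 1) * ω / m), by positivity, by positivity,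
    fun t ht => ?_⟩
  have hr : 0 < ϱ t := mapsTo_Ioi_of_rightInvOn hyperbolicBallVolume_zero hmaps hinv ht
  have hs : 0 < sinh (ϱ t) := sinh_pos_iff.2 hr
  have hV : hyperbolicBallVolume m ω (ϱ t) = t := hinv ht
  rw [rpow_one_sub_natCast_succ, rpow_neg_one_add_one_div_natCast_succ ht.le]
  constructor
  · refine inv_max_mul_min_inv_le (pow_pos hs m) (rpow_pos_of_pos ht _) ht (by positivity)
      (by positivity) (pow_le_rpow_div_succ_or_le_of_mul_pow_succ_le hs.le ht.le hω ?_)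
    simpa only [hV] using
      mul_sinh_pow_succ_le_one_add_sinh_mul_hyperbolicBallVolume (m := m) hω.le hr.le
  · refine inv_le_max_mul_min_inv (pow_pos hs m) (rpow_pos_of_pos ht _) ht
      (rpow_div_succ_le_of_le_mul_pow_succ hs.le ht.le hω.le ?_) ?_
    · simpa only [hV] using hyperbolicBallVolume_le_mul_sinh_pow_succ (m := m) hω.le hr.le
    · simpa only [hV] using hyperbolicBallVolume_le_mul_sinh_pow hm hω.le hr.le

lemma tendsto_sinh_rpow_div_rpow_nhdsGT_zero_of_rightInvOn (hω : 0 < ω)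
    (hmaps : MapsTo ϱ (Ioi 0) (Ici 0)) (hinv : RightInvOn ϱ (hyperbolicBallVolume m ω) (Ioi 0)) :
    Tendsto
      (fun t => sinh (ϱ t) ^ ((1 : ℝ) - (m + 1 : ℕ)) / t ^ (-1 + 1 / ((m + 1 : ℕ) : ℝ)))
      (𝓝[>] 0) (𝓝 (ω ^ ((((m + 1 : ℕ) : ℝ) - 1) / (m + 1 : ℕ)))) := by
  have hϱ := tendsto_nhdsGT_zero_of_rightInvOn (strictMonoOn_hyperbolicBallVolume hω)
    hyperbolicBallVolume_zero hmaps hinv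
  have := ((tendsto_hyperbolicBallVolume_div_sinh_pow_succ_nhdsGT_zero (m := m)).comp
    hϱ).rpow_const (p := (m : ℝ) / (m + 1)) (Or.inl hω.ne')
  rw [show (((m + 1 : ℕ) : ℝ) - 1) / (m + 1 : ℕ) = (m : ℝ) / (m + 1) by push_cast; ring]
  refine this.congr' ?_
  filter_upwards [self_mem_nhdsWithin] with t (ht : 0 < t)
  have hs := sinh_pos_iff.2 (mapsTo_Ioi_of_rightInvOn hyperbolicBallVolume_zero hmaps hinv ht)
  rw [Function.comp_apply, hinv ht, rpow_one_sub_natCast_succ,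
    rpow_neg_one_add_one_div_natCast_succ ht.le, div_rpow ht.le (by positivity),
    pow_succ_rpow_div_succ hs.le, inv_div_inv]

lemma tendsto_sinh_rpow_div_inv_atTop_of_rightInvOn (hm : m ≠ 0) (hω : 0 < ω)
    (hmaps : MapsTo ϱ (Ioi 0) (Ici 0)) (hinv : RightInvOn ϱ (hyperbolicBallVolume m ω) (Ioi 0)) :
    Tendsto (fun t => sinh (ϱ t) ^ ((1 : ℝ) - (m + 1 : ℕ)) / t⁻¹) atTop
      (𝓝 (((m + 1 : ℕ) : ℝ) * ω / (((m + 1 : ℕ) : ℝ) - 1))) := by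
  have hϱ := tendsto_atTop_of_rightInvOn (strictMonoOn_hyperbolicBallVolume hω).monotoneOn
    hmaps hinv
  rw [show ((m + 1 : ℕ) : ℝ) * ω / (((m + 1 : ℕ) : ℝ) - 1) = (m + 1) * ω / m by
    push_cast; ring]
  refine (tendsto_hyperbolicBallVolume_div_sinh_pow_atTop hm |>.comp hϱ).congr' ?_
  filter_upwards [eventually_gt_atTop 0] with t ht
  rw [Function.comp_apply, hinv ht, rpow_one_sub_natCast_succ, inv_div_inv]

end InverseHyperbolicBallVolume

theorem stmt11_general (n : ℕ) (hn : 2 ≤ n) (ω : ℝ)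
    (hω : ω = (volume (Metric.ball (0 : EuclideanSpace ℝ (Fin n)) 1)).toReal)
    (V ϱ : ℝ → ℝ)
    (hV : ∀ r : ℝ, V r = n * ω * ∫ t in Ioo (0 : ℝ) r, Real.sinh t ^ (n - 1))
    (hϱ2 : ∀ t : ℝ, 0 ≤ t → 0 ≤ ϱ t ∧ V (ϱ t) = t) :
    (∃ c C : ℝ, 0 < c ∧ 0 < C ∧ ∀ t : ℝ, 0 < t →
      c * min (t ^ (-1 + 1 / (n : ℝ))) t⁻¹ ≤ Real.sinh (ϱ t) ^ ((1 : ℝ) - n) ∧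
      Real.sinh (ϱ t) ^ ((1 : ℝ) - n) ≤ C * min (t ^ (-1 + 1 / (n : ℝ))) t⁻¹) ∧
    Tendsto (fun t : ℝ => Real.sinh (ϱ t) ^ ((1 : ℝ) - n) / t ^ (-1 + 1 / (n : ℝ)))
      (nhdsWithin 0 (Ioi 0)) (nhds (ω ^ (((n : ℝ) - 1) / n))) ∧
    Tendsto (fun t : ℝ => Real.sinh (ϱ t) ^ ((1 : ℝ) - n) / t⁻¹)
      atTop (nhds ((n : ℝ) * ω / ((n : ℝ) - 1))) := by
  obtain ⟨m, rfl⟩ : ∃ m, n = m + 1 := ⟨n - 1, by omega⟩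
  have hm : m ≠ 0 := by omega
  have hω0 : 0 < ω :=
    hω ▸ ENNReal.toReal_pos (Metric.measure_ball_pos _ _ one_pos).ne' measure_ball_lt_top.ne
  have hmaps : MapsTo ϱ (Ioi 0) (Ici 0) := fun t ht => (hϱ2 t (le_of_lt ht)).1
  have hinv : RightInvOn ϱ (hyperbolicBallVolume m ω) (Ioi 0) := fun t ht => by
    obtain ⟨hr, hVt⟩ := hϱ2 t (le_of_lt ht)
    rw [hV, ← integral_Ioc_eq_integral_Ioo, ← integral_of_le hr, Nat.add_sub_cancel,
      Nat.cast_succ] at hVt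
    exact hVt
  exact ⟨exists_bounds_sinh_rpow_of_rightInvOn hm hω0 hmaps hinv,
    tendsto_sinh_rpow_div_rpow_nhdsGT_zero_of_rightInvOn hω0 hmaps hinv,
    tendsto_sinh_rpow_div_inv_atTop_of_rightInvOn hm hω0 hmaps hinv⟩

theorem stmt11 (n : ℕ) (hn : 2 ≤ n) (ω : ℝ)
    (hω : ω = (volume (Metric.ball (0 : EuclideanSpace ℝ (Fin n)) 1)).toReal)
    (V ϱ : ℝ → ℝ)
    (hV : ∀ r : ℝ, V r = n * ω * ∫ t in Ioo (0 : ℝ) r, Real.sinh t ^ (n - 1))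
    (hϱ1 : ∀ r : ℝ, 0 ≤ r → ϱ (V r) = r)
    (hϱ2 : ∀ t : ℝ, 0 ≤ t → 0 ≤ ϱ t ∧ V (ϱ t) = t) :
    (∃ c C : ℝ, 0 < c ∧ 0 < C ∧ ∀ t : ℝ, 0 < t →
      c * min (t ^ (-1 + 1 / (n : ℝ))) t⁻¹ ≤ Real.sinh (ϱ t) ^ ((1 : ℝ) - n) ∧
      Real.sinh (ϱ t) ^ ((1 : ℝ) - n) ≤ C * min (t ^ (-1 + 1 / (n : ℝ))) t⁻¹) ∧
    Tendsto (fun t : ℝ => Real.sinh (ϱ t) ^ ((1 : ℝ) - n) / t ^ (-1 + 1 / (n : ℝ)))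
      (nhdsWithin 0 (Ioi 0)) (nhds (ω ^ (((n : ℝ) - 1) / n))) ∧
    Tendsto (fun t : ℝ => Real.sinh (ϱ t) ^ ((1 : ℝ) - n) / t⁻¹)
      atTop (nhds ((n : ℝ) * ω / ((n : ℝ) - 1))) :=
  stmt11_general n hn ω hω V ϱ hV hϱ2
end

section
/- With V and ϱ as above, t·sinh(ϱ(t))^{2−2n} ≍ min{t^{−1+2/n}, t^{−1}} for all t ∈ (0,∞), with constants depending only on n. -/
open MeasureTheory Set Real

/-!
Write `s = sinh ϱ(t)`, so that `t = V(ϱ(t)) = nω ∫₀^{ϱ(t)} sinh^{n-1}`. Comparing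
`sinh^{n-1}` with `sinh^{n-1} cosh = (sinhⁿ / n)'` and using `sinh ≤ cosh ≤ 1 + sinh` on
`[0, ∞)` gives `ω sⁿ ≤ (1 + s) t` and `t ≤ min (ω sⁿ) (2ω s^{n-1})`, hence
`s ≍ max (t^{1/n}) (t^{1/(n-1)})`. Raising this to the power `2 - 2n < 0` turns the maximum
into `min (t^{-2+2/n}) (t^{-2})`.
-/

section SinhPowIntegral

variable {r : ℝ}

theorem integral_sinh_pow_mul_cosh (m : ℕ) (r : ℝ) :
    ∫ x in (0 : ℝ)..r, sinh x ^ m * cosh x = sinh r ^ (m + 1) / (m + 1) := by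
  have hderiv : ∀ x ∈ uIcc 0 r,
      HasDerivAt (fun y => sinh y ^ (m + 1) / (m + 1)) (sinh x ^ m * cosh x) x := by
    intro x _
    refine (((hasDerivAt_sinh x).pow (m + 1)).div_const ((m : ℝ) + 1)).congr_deriv ?_
    rw [Nat.add_sub_cancel, Nat.cast_succ]
    field_simp
  rw [intervalIntegral.integral_eq_sub_of_hasDerivAt hderiv
    (((continuous_sinh.pow m).mul continuous_cosh).intervalIntegrable _ _)]
  simp

theorem cosh_le_one_add_sinh (hr : 0 ≤ r) : cosh r ≤ 1 + sinh r := by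
  have h := cosh_sub_sinh r
  have : exp (-r) ≤ 1 := exp_le_one_iff.2 (by linarith)
  linarith

variable {n : ℕ}

theorem natCast_mul_integral_sinh_pow_le (hn : n ≠ 0) (hr : 0 ≤ r) :
    n * ∫ x in (0 : ℝ)..r, sinh x ^ (n - 1) ≤ sinh r ^ n := by
  obtain ⟨m, rfl⟩ := Nat.exists_eq_add_one_of_ne_zero hn
  rw [Nat.add_sub_cancel, ← le_div_iff₀' (by positivity), Nat.cast_succ,
    ← integral_sinh_pow_mul_cosh]
  refine intervalIntegral.integral_mono_on hr ((continuous_sinh.pow m).intervalIntegrable _ _)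
    (((continuous_sinh.pow m).mul continuous_cosh).intervalIntegrable _ _) fun x hx => ?_
  exact le_mul_of_one_le_right (pow_nonneg (sinh_nonneg_iff.2 hx.1) m) (one_le_cosh x)

theorem natCast_mul_integral_sinh_pow_le_two_mul (hn : 2 ≤ n) (hr : 0 ≤ r) :
    n * ∫ x in (0 : ℝ)..r, sinh x ^ (n - 1) ≤ 2 * sinh r ^ (n - 1) := by
  obtain ⟨m, rfl⟩ := Nat.exists_eq_add_of_le' hn
  rw [show m + 2 - 1 = m + 1 by omega]
  set I := ∫ x in (0 : ℝ)..r, sinh x ^ (m + 1)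
  have hI : 0 ≤ I :=
    intervalIntegral.integral_nonneg hr fun x hx => pow_nonneg (sinh_nonneg_iff.2 hx.1) _
  have hsinh_le_cosh : (m + 1) * I ≤ sinh r ^ (m + 1) := by
    rw [← le_div_iff₀' (by positivity), ← integral_sinh_pow_mul_cosh]
    refine intervalIntegral.integral_mono_on hr
      ((continuous_sinh.pow _).intervalIntegrable _ _)
      (((continuous_sinh.pow m).mul continuous_cosh).intervalIntegrable _ _) fun x hx => ?_
    rw [pow_succ]
    exact mul_le_mul_of_nonneg_left (sinh_lt_cosh x).le (pow_nonneg (sinh_nonneg_iff.2 hx.1) m)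
  push_cast
  nlinarith

theorem sinh_pow_le_one_add_sinh_mul (hn : n ≠ 0) (hr : 0 ≤ r) :
    sinh r ^ n ≤ (1 + sinh r) * (n * ∫ x in (0 : ℝ)..r, sinh x ^ (n - 1)) := by
  obtain ⟨m, rfl⟩ := Nat.exists_eq_add_one_of_ne_zero hn
  rw [Nat.add_sub_cancel, Nat.cast_succ, mul_left_comm, ← div_le_iff₀' (by positivity),
    ← integral_sinh_pow_mul_cosh, ← intervalIntegral.integral_const_mul]
  refine intervalIntegral.integral_mono_on hr
    (((continuous_sinh.pow m).mul continuous_cosh).intervalIntegrable _ _)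
    ((continuous_const.mul (continuous_sinh.pow m)).intervalIntegrable _ _) fun x hx => ?_
  have hcosh : cosh x ≤ 1 + sinh r := by
    refine (cosh_le_cosh.2 ?_).trans (cosh_le_one_add_sinh hr)
    rw [abs_of_nonneg hx.1, abs_of_nonneg hr]
    exact hx.2
  rw [mul_comm (1 + sinh r)]
  exact mul_le_mul_of_nonneg_left hcosh (pow_nonneg (sinh_nonneg_iff.2 hx.1) m)

theorem sinh_pow_bounds_of_eq_mul_integral {ω t : ℝ} (hn : 2 ≤ n) (hω : 0 ≤ ω)
    (hr : 0 ≤ r) (ht : t = ω * (n * ∫ x in (0 : ℝ)..r, sinh x ^ (n - 1))) :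
    ω * sinh r ^ n ≤ (1 + sinh r) * t ∧ t ≤ ω * sinh r ^ n ∧
      t ≤ 2 * ω * sinh r ^ (n - 1) := by
  subst ht
  refine ⟨?_, ?_, ?_⟩
  · rw [mul_left_comm]
    exact mul_le_mul_of_nonneg_left (sinh_pow_le_one_add_sinh_mul (by omega) hr) hω
  · exact mul_le_mul_of_nonneg_left (natCast_mul_integral_sinh_pow_le (by omega) hr) hω
  · rw [mul_assoc, mul_left_comm (2 : ℝ)]
    exact mul_le_mul_of_nonneg_left (natCast_mul_integral_sinh_pow_le_two_mul hn hr) hω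

end SinhPowIntegral

section PowerComparison

variable {K s t : ℝ}

theorem mul_pow_rpow_inv {k : ℕ} (hK : 0 ≤ K) (hs : 0 ≤ s) (hk : k ≠ 0) :
    (K * s ^ k) ^ (k⁻¹ : ℝ) = K ^ (k⁻¹ : ℝ) * s := by
  rw [mul_rpow hK (pow_nonneg hs k), pow_rpow_inv_natCast hs hk]

theorem mul_le_rpow_inv_of_mul_pow_le {k : ℕ} (hK : 0 ≤ K) (hs : 0 ≤ s) (hk : k ≠ 0)
    (h : K * s ^ k ≤ t) : K ^ (k⁻¹ : ℝ) * s ≤ t ^ (k⁻¹ : ℝ) :=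
  mul_pow_rpow_inv hK hs hk ▸ rpow_le_rpow (by positivity) h (by positivity)

theorem rpow_inv_le_mul_of_le_mul_pow {k : ℕ} (hK : 0 ≤ K) (hs : 0 ≤ s) (hk : k ≠ 0)
    (ht : 0 ≤ t) (h : t ≤ K * s ^ k) : t ^ (k⁻¹ : ℝ) ≤ K ^ (k⁻¹ : ℝ) * s :=
  mul_pow_rpow_inv hK hs hk ▸ rpow_le_rpow ht h (by positivity)

variable {n : ℕ} {ω : ℝ}

theorem mul_le_max_rpow_inv_of_pow_le (hn : 2 ≤ n) (hω : 0 ≤ ω) (hs : 0 ≤ s) (ht : 0 ≤ t)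
    (h : ω * s ^ n ≤ (1 + s) * t) :
    min ((ω / 2) ^ (n⁻¹ : ℝ)) ((ω / 2) ^ (((n - 1 : ℕ) : ℝ)⁻¹)) * s ≤
      max (t ^ (n⁻¹ : ℝ)) (t ^ (((n - 1 : ℕ) : ℝ)⁻¹)) := by
  rcases le_total s 1 with hs1 | hs1
  · have hsmall : ω / 2 * s ^ n ≤ t := by nlinarith [pow_nonneg hs n]
    calc _ ≤ (ω / 2) ^ (n⁻¹ : ℝ) * s := by gcongr; exact min_le_left _ _
      _ ≤ t ^ (n⁻¹ : ℝ) := mul_le_rpow_inv_of_mul_pow_le (by positivity) hs (by omega) hsmall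
      _ ≤ _ := le_max_left _ _
  · have hlarge : ω / 2 * s ^ (n - 1) ≤ t := by
      have hsn : s ^ n = s ^ (n - 1) * s := by rw [← pow_succ, Nat.sub_add_cancel (by omega)]
      rw [hsn] at h
      nlinarith [pow_nonneg hs (n - 1)]
    calc _ ≤ (ω / 2) ^ (((n - 1 : ℕ) : ℝ)⁻¹) * s := by gcongr; exact min_le_right _ _
      _ ≤ t ^ (((n - 1 : ℕ) : ℝ)⁻¹) :=
        mul_le_rpow_inv_of_mul_pow_le (by positivity) hs (by omega) hlarge
      _ ≤ _ := le_max_right _ _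

theorem max_rpow_inv_le_mul_of_le_pow (hn : 2 ≤ n) (hω : 0 ≤ ω) (hs : 0 ≤ s) (ht : 0 ≤ t)
    (h₁ : t ≤ ω * s ^ n) (h₂ : t ≤ 2 * ω * s ^ (n - 1)) :
    max (t ^ (n⁻¹ : ℝ)) (t ^ (((n - 1 : ℕ) : ℝ)⁻¹)) ≤
      max (ω ^ (n⁻¹ : ℝ)) ((2 * ω) ^ (((n - 1 : ℕ) : ℝ)⁻¹)) * s :=
  max_le
    ((rpow_inv_le_mul_of_le_mul_pow hω hs (by omega) ht h₁).trans
      (by gcongr; exact le_max_left _ _))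
    ((rpow_inv_le_mul_of_le_mul_pow (by positivity) hs (by omega) ht h₂).trans
      (by gcongr; exact le_max_right _ _))

theorem mul_max_rpow_inv_rpow (hn : 2 ≤ n) (ht : 0 < t) :
    t * max (t ^ (n⁻¹ : ℝ)) (t ^ (((n - 1 : ℕ) : ℝ)⁻¹)) ^ ((2 : ℝ) - 2 * n) =
      min (t ^ (-1 + 2 / (n : ℝ))) t⁻¹ := by
  have hnR : (2 : ℝ) ≤ n := by exact_mod_cast hn
  have hn1 : ((n - 1 : ℕ) : ℝ) = n - 1 := by rw [Nat.cast_sub (by omega), Nat.cast_one]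
  have e₁ : 1 + (n : ℝ)⁻¹ * (2 - 2 * n) = -1 + 2 / n := by field_simp; ring
  have e₂ : 1 + ((n - 1 : ℕ) : ℝ)⁻¹ * (2 - 2 * n) = -1 := by
    have : (n : ℝ) - 1 ≠ 0 := by linarith
    rw [hn1]
    field_simp
    ring
  have hmul (y : ℝ) : t * t ^ y = t ^ (1 + y) := by rw [rpow_add ht, rpow_one]
  rw [(antitoneOn_rpow_Ioi_of_exponent_nonpos (by linarith)).map_max (rpow_pos_of_pos ht _)
    (rpow_pos_of_pos ht _), mul_min_of_nonneg _ _ ht.le, ← rpow_mul ht.le, ← rpow_mul ht.le,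
    hmul, hmul, e₁, e₂, rpow_neg_one]

theorem rpow_le_of_mul_le_of_nonpos {a x y e : ℝ} (ha : 0 < a) (hx : 0 < x) (he : e ≤ 0)
    (h : a * x ≤ y) : a ^ (-e) * y ^ e ≤ x ^ e := by
  have hle : y ^ e ≤ a ^ e * x ^ e :=
    mul_rpow ha.le hx.le ▸ rpow_le_rpow_of_nonpos (by positivity) h he
  calc a ^ (-e) * y ^ e ≤ a ^ (-e) * (a ^ e * x ^ e) := by gcongr
    _ = x ^ e := by rw [← mul_assoc, ← rpow_add ha, neg_add_cancel, rpow_zero, one_mul]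

theorem rpow_le_of_le_mul_of_nonpos {b x y e : ℝ} (hb : 0 < b) (hy : 0 < y) (he : e ≤ 0)
    (h : y ≤ b * x) : x ^ e ≤ b ^ (-e) * y ^ e := by
  have hx : 0 < x := pos_of_mul_pos_right (hy.trans_le h) hb.le
  have hle : b ^ e * x ^ e ≤ y ^ e :=
    mul_rpow hb.le hx.le ▸ rpow_le_rpow_of_nonpos hy h he
  calc x ^ e = b ^ (-e) * (b ^ e * x ^ e) := by
        rw [← mul_assoc, ← rpow_add hb, neg_add_cancel, rpow_zero, one_mul]
    _ ≤ b ^ (-e) * y ^ e := by gcongr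

end PowerComparison

theorem stmt12_general (n : ℕ) (hn : 2 ≤ n) (ω : ℝ)
    (hω : ω = (volume (Metric.ball (0 : EuclideanSpace ℝ (Fin n)) 1)).toReal)
    (V ϱ : ℝ → ℝ)
    (hV : ∀ r : ℝ, V r = n * ω * ∫ t in Ioo (0 : ℝ) r, Real.sinh t ^ (n - 1))
    (hϱ2 : ∀ t : ℝ, 0 ≤ t → 0 ≤ ϱ t ∧ V (ϱ t) = t) :
    ∃ c C : ℝ, 0 < c ∧ 0 < C ∧ ∀ t : ℝ, 0 < t →
      c * min (t ^ (-1 + 2 / (n : ℝ))) t⁻¹ ≤ t * Real.sinh (ϱ t) ^ ((2 : ℝ) - 2 * n) ∧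
      t * Real.sinh (ϱ t) ^ ((2 : ℝ) - 2 * n) ≤ C * min (t ^ (-1 + 2 / (n : ℝ))) t⁻¹ := by
  have hω₀ : 0 < ω :=
    hω ▸ ENNReal.toReal_pos (Metric.measure_ball_pos _ _ one_pos).ne' measure_ball_lt_top.ne
  have he : (2 : ℝ) - 2 * n ≤ 0 := by linarith [show (2 : ℝ) ≤ n by exact_mod_cast hn]
  set a := min ((ω / 2) ^ (n⁻¹ : ℝ)) ((ω / 2) ^ (((n - 1 : ℕ) : ℝ)⁻¹))
  set b := max (ω ^ (n⁻¹ : ℝ)) ((2 * ω) ^ (((n - 1 : ℕ) : ℝ)⁻¹))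
  have ha : 0 < a := by positivity
  have hb : 0 < b := by positivity
  refine ⟨a ^ (-(2 - 2 * n : ℝ)), b ^ (-(2 - 2 * n : ℝ)), by positivity, by positivity,
    fun t ht => ?_⟩
  obtain ⟨hr, hVr⟩ := hϱ2 t ht.le
  set r := ϱ t
  have ht_eq : t = ω * (n * ∫ x in (0 : ℝ)..r, sinh x ^ (n - 1)) := by
    rw [← hVr, hV, intervalIntegral.integral_of_le hr, integral_Ioc_eq_integral_Ioo]
    ring
  have hs : 0 < sinh r := by
    refine sinh_pos_iff.2 (hr.lt_of_ne fun h => ht.ne' ?_)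
    rw [ht_eq, ← h, intervalIntegral.integral_same, mul_zero, mul_zero]
  obtain ⟨hA, hB, hC⟩ := sinh_pow_bounds_of_eq_mul_integral hn hω₀.le hr ht_eq
  have hlow := mul_le_max_rpow_inv_of_pow_le hn hω₀.le hs.le ht.le hA
  have hup := max_rpow_inv_le_mul_of_le_pow hn hω₀.le hs.le ht.le hB hC
  rw [← mul_max_rpow_inv_rpow hn ht, mul_left_comm, mul_left_comm _ t]
  exact ⟨mul_le_mul_of_nonneg_left (rpow_le_of_mul_le_of_nonpos ha hs he hlow) ht.le,
    mul_le_mul_of_nonneg_left (rpow_le_of_le_mul_of_nonpos hb (by positivity) he hup) ht.le⟩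

theorem stmt12 (n : ℕ) (hn : 2 ≤ n) (ω : ℝ)
    (hω : ω = (volume (Metric.ball (0 : EuclideanSpace ℝ (Fin n)) 1)).toReal)
    (V ϱ : ℝ → ℝ)
    (hV : ∀ r : ℝ, V r = n * ω * ∫ t in Ioo (0 : ℝ) r, Real.sinh t ^ (n - 1))
    (hϱ1 : ∀ r : ℝ, 0 ≤ r → ϱ (V r) = r)
    (hϱ2 : ∀ t : ℝ, 0 ≤ t → 0 ≤ ϱ t ∧ V (ϱ t) = t) :
    ∃ c C : ℝ, 0 < c ∧ 0 < C ∧ ∀ t : ℝ, 0 < t →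
      c * min (t ^ (-1 + 2 / (n : ℝ))) t⁻¹ ≤ t * Real.sinh (ϱ t) ^ ((2 : ℝ) - 2 * n) ∧
      t * Real.sinh (ϱ t) ^ ((2 : ℝ) - 2 * n) ≤ C * min (t ^ (-1 + 2 / (n : ℝ))) t⁻¹ :=
  stmt12_general n hn ω hω V ϱ hV hϱ2
end

section
/- For every k ∈ ℕ₀ and every t ∈ (0,∞), R_2^{k+1} χ_{(0,1)}(t) ≳ (1+log t)^k χ_{(1,∞)}(t)/t, with implicit constant depending only on n and k. -/
open MeasureTheory Set Real
open scoped ENNReal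

/-!
For `t ≤ 1` the weight `phi n α t` is at least `1`, so `Rop n α` dominates integration from `0`
and the iterates of the indicator of `(0, 1)` are at least `t ^ j / j !` there. For `t > 1` the
weight is `t⁻¹`; splitting `∫₀ᵗ` at `1`, the part over `(0, 1)` contributes `1 / (k + 1)!`,
while inductively the part over `(1, t)` integrates `(1 + log s) ^ k / s` to
`((1 + log t) ^ (k + 1) - 1) / (k + 1)`. Together they give
`(1 + log t) ^ k / ((k + 1)! * t)` as a lower bound for the `(k + 1)`-th iterate.
-/

open scoped Nat

theorem lintegral_Ioo_ofReal_deriv {F F' : ℝ → ℝ} {a b : ℝ} (hab : a ≤ b)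
    (hcont : ContinuousOn F (Icc a b)) (hderiv : ∀ x ∈ Ioo a b, HasDerivAt F (F' x) x)
    (hnonneg : ∀ x ∈ Ioo a b, 0 ≤ F' x) :
    ∫⁻ x in Ioo a b, ENNReal.ofReal (F' x) = ENNReal.ofReal (F b - F a) := by
  have hint : IntegrableOn F' (Ioc a b) :=
    intervalIntegral.integrableOn_deriv_of_nonneg hcont hderiv hnonneg
  rw [← intervalIntegral.integral_eq_sub_of_hasDerivAt_of_le hab hcont hderiv
      ((intervalIntegrable_iff_integrableOn_Ioc_of_le hab).2 hint),
    intervalIntegral.integral_of_le hab, integral_Ioc_eq_integral_Ioo,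
    ofReal_integral_eq_lintegral_ofReal (hint.mono_set Ioo_subset_Ioc_self)
      ((ae_restrict_iff' measurableSet_Ioo).2 (ae_of_all _ hnonneg))]

theorem one_le_phi {n : ℕ} {α t : ℝ} (hα : α ≤ n) (ht₀ : 0 < t) (ht₁ : t ≤ 1) :
    1 ≤ phi n α t := by
  refine le_min (one_le_rpow_of_pos_of_le_one_of_nonpos ht₀ ht₁ ?_) ((one_le_inv₀ ht₀).2 ht₁)
  have : α / n ≤ 1 := div_le_one_of_le₀ hα n.cast_nonneg
  linarith

theorem phi_eq_inv {n : ℕ} {α t : ℝ} (hα : 0 ≤ α) (ht : 1 ≤ t) : phi n α t = t⁻¹ := by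
  have : -1 ≤ -1 + α / n := le_add_of_nonneg_right (div_nonneg hα n.cast_nonneg)
  exact min_eq_right (by simpa [rpow_neg_one] using rpow_le_rpow_of_exponent_le ht this)

theorem lintegral_le_Rop {n : ℕ} {α t : ℝ} (hα : α ≤ n) (ht₀ : 0 < t) (ht₁ : t ≤ 1)
    (f : ℝ → ℝ≥0∞) : ∫⁻ s in Ioo 0 t, f s ≤ Rop n α f t :=
  le_mul_of_one_le_left' (ENNReal.one_le_ofReal.2 (one_le_phi hα ht₀ ht₁))

theorem Rop_of_one_le {n : ℕ} {α t : ℝ} (hα : 0 ≤ α) (ht : 1 ≤ t) (f : ℝ → ℝ≥0∞) :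
    Rop n α f t = ENNReal.ofReal t⁻¹ * ∫⁻ s in Ioo 0 t, f s := by
  rw [Rop, phi_eq_inv hα ht]

theorem hasDerivAt_pow_succ_div_factorial (j : ℕ) (s : ℝ) :
    HasDerivAt (fun x : ℝ => x ^ (j + 1) / (j + 1)!) (s ^ j / j !) s := by
  refine ((hasDerivAt_pow (j + 1) s).div_const ((j + 1)! : ℝ)).congr_deriv ?_
  push_cast [Nat.factorial_succ]
  field_simp

theorem hasDerivAt_one_add_log_pow_succ_div_factorial {s : ℝ} (hs : s ≠ 0) (m : ℕ) :
    HasDerivAt (fun x => (1 + log x) ^ (m + 1) / ((m + 1)! * (m + 1)))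
      ((1 + log s) ^ m / ((m + 1)! * s)) s := by
  refine ((((hasDerivAt_log hs).const_add 1).pow (m + 1)).div_const _).congr_deriv ?_
  push_cast
  field_simp

theorem ofReal_pow_succ_div_factorial_le_lintegral {f : ℝ → ℝ≥0∞} (j : ℕ) {t : ℝ} (ht : 0 ≤ t)
    (hf : ∀ s ∈ Ioo 0 t, ENNReal.ofReal (s ^ j / j !) ≤ f s) :
    ENNReal.ofReal (t ^ (j + 1) / (j + 1)!) ≤ ∫⁻ s in Ioo 0 t, f s := by
  calc ENNReal.ofReal (t ^ (j + 1) / (j + 1)!)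
      = ∫⁻ s in Ioo 0 t, ENNReal.ofReal (s ^ j / j !) := by
        rw [lintegral_Ioo_ofReal_deriv ht (by fun_prop)
          (fun s _ => hasDerivAt_pow_succ_div_factorial j s) (fun s hs => by positivity [hs.1])]
        simp
    _ ≤ ∫⁻ s in Ioo 0 t, f s := setLIntegral_mono' measurableSet_Ioo hf

theorem ofReal_pow_div_factorial_le_iterate_Rop {n : ℕ} {α : ℝ} (hα : α ≤ n) (j : ℕ) {t : ℝ}
    (ht : t ∈ Ioo 0 1) :
    ENNReal.ofReal (t ^ j / j !) ≤ (Rop n α)^[j] ((Ioo (0 : ℝ) 1).indicator 1) t := by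
  induction j generalizing t with
  | zero => simp [ht]
  | succ j ih =>
    rw [Function.iterate_succ_apply']
    exact (ofReal_pow_succ_div_factorial_le_lintegral j ht.1.le
      fun s hs => ih ⟨hs.1, hs.2.trans ht.2⟩).trans (lintegral_le_Rop hα ht.1 ht.2.le _)

theorem ofReal_one_add_log_pow_succ_div_factorial_le_lintegral {f : ℝ → ℝ≥0∞} (m : ℕ) {t : ℝ}
    (ht : 1 ≤ t) (hf : ∀ s ∈ Ioo 1 t, ENNReal.ofReal ((1 + log s) ^ m / ((m + 1)! * s)) ≤ f s) :
    ENNReal.ofReal (((1 + log t) ^ (m + 1) - 1) / ((m + 1)! * (m + 1))) ≤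
      ∫⁻ s in Ioo 1 t, f s := by
  have hderiv (s : ℝ) (hs : s ∈ Icc 1 t) :=
    hasDerivAt_one_add_log_pow_succ_div_factorial (zero_lt_one.trans_le hs.1).ne' m
  calc ENNReal.ofReal (((1 + log t) ^ (m + 1) - 1) / ((m + 1)! * (m + 1)))
      = ∫⁻ s in Ioo 1 t, ENNReal.ofReal ((1 + log s) ^ m / ((m + 1)! * s)) := by
        rw [lintegral_Ioo_ofReal_deriv ht
          (fun s hs => (hderiv s hs).continuousAt.continuousWithinAt)
          (fun s hs => hderiv s (Ioo_subset_Icc_self hs))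
          (fun s hs => by have := log_nonneg hs.1.le; positivity [hs.1])]
        simp [sub_div]
    _ ≤ ∫⁻ s in Ioo 1 t, f s := setLIntegral_mono' measurableSet_Ioo hf

theorem lintegral_Ioo_zero_one_add_le {t : ℝ} (ht : 1 ≤ t) (f : ℝ → ℝ≥0∞) :
    (∫⁻ s in Ioo 0 1, f s) + ∫⁻ s in Ioo 1 t, f s ≤ ∫⁻ s in Ioo 0 t, f s := by
  calc (∫⁻ s in Ioo 0 1, f s) + ∫⁻ s in Ioo 1 t, f s = ∫⁻ s in Ioo 0 1 ∪ Ioo 1 t, f s :=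
        (lintegral_union measurableSet_Ioo (Ioo_disjoint_Ioo.2 (by simp))).symm
    _ ≤ ∫⁻ s in Ioo 0 t, f s :=
        lintegral_mono_set (union_subset (Ioo_subset_Ioo_right ht) (Ioo_subset_Ioo_left zero_le_one))

theorem div_factorial_le_inv_factorial_add {X : ℝ} (hX : 1 ≤ X) (m : ℕ) :
    X / (m + 2)! ≤ 1 / (m + 2)! + (X - 1) / ((m + 1)! * (m + 1)) := by
  rw [Nat.factorial_succ (m + 1)]
  push_cast
  calc X / ((m + 1 + 1) * (m + 1)!)
      = 1 / ((m + 1 + 1) * (m + 1)!) + (X - 1) / ((m + 1)! * (m + 1 + 1)) := by ring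
    _ ≤ _ := by gcongr; linarith

theorem ofReal_one_add_log_pow_div_le_iterate_Rop {n : ℕ} {α : ℝ} (hα₀ : 0 ≤ α) (hα : α ≤ n)
    (k : ℕ) {t : ℝ} (ht : 1 < t) :
    ENNReal.ofReal ((1 + log t) ^ k / ((k + 1)! * t)) ≤
      (Rop n α)^[k + 1] ((Ioo (0 : ℝ) 1).indicator 1) t := by
  have hunit (j : ℕ) : ENNReal.ofReal (1 / (j + 1)!) ≤
      ∫⁻ s in Ioo 0 1, (Rop n α)^[j] ((Ioo (0 : ℝ) 1).indicator 1) s := by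
    simpa using ofReal_pow_succ_div_factorial_le_lintegral j zero_le_one
      fun s hs => ofReal_pow_div_factorial_le_iterate_Rop hα j hs
  induction k generalizing t with
  | zero =>
    rw [Function.iterate_one, Rop_of_one_le hα₀ ht.le]
    calc ENNReal.ofReal ((1 + log t) ^ 0 / ((0 + 1)! * t))
        = ENNReal.ofReal t⁻¹ * ENNReal.ofReal (1 / (0 + 1)!) := by
          rw [← ENNReal.ofReal_mul (inv_nonneg.2 (by linarith))]
          simp
      _ ≤ ENNReal.ofReal t⁻¹ * ∫⁻ s in Ioo 0 t, (Ioo (0 : ℝ) 1).indicator 1 s := by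
          gcongr
          exact (hunit 0).trans (lintegral_mono_set (Ioo_subset_Ioo_right ht.le))
  | succ m ih =>
    set g := (Rop n α)^[m + 1] ((Ioo (0 : ℝ) 1).indicator 1)
    rw [Function.iterate_succ_apply', Rop_of_one_le hα₀ ht.le]
    have hlog := ofReal_one_add_log_pow_succ_div_factorial_le_lintegral m ht.le
      fun s hs => ih (t := s) hs.1
    have hL : 1 ≤ (1 + log t) ^ (m + 1) := one_le_pow₀ (by linarith [log_nonneg ht.le])
    calc ENNReal.ofReal ((1 + log t) ^ (m + 1) / ((m + 2)! * t))
        ≤ ENNReal.ofReal (t⁻¹ * (1 / (m + 2)! +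
            ((1 + log t) ^ (m + 1) - 1) / ((m + 1)! * (m + 1)))) := by
          rw [show (1 + log t) ^ (m + 1) / ((m + 2)! * t) =
            t⁻¹ * ((1 + log t) ^ (m + 1) / (m + 2)!) by ring]
          gcongr
          exact div_factorial_le_inv_factorial_add hL m
      _ = ENNReal.ofReal t⁻¹ * (ENNReal.ofReal (1 / (m + 2)!) +
            ENNReal.ofReal (((1 + log t) ^ (m + 1) - 1) / ((m + 1)! * (m + 1)))) := by
          rw [ENNReal.ofReal_mul (inv_nonneg.2 (by linarith)),
            ENNReal.ofReal_add (by positivity) (div_nonneg (by linarith) (by positivity))]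
      _ ≤ ENNReal.ofReal t⁻¹ * ∫⁻ s in Ioo 0 t, g s := by
          gcongr
          exact (add_le_add (hunit _) hlog).trans (lintegral_Ioo_zero_one_add_le ht.le _)

theorem stmt15 (n : ℕ) (hn : 3 ≤ n) (k : ℕ) :
    ∃ c : ℝ, 0 < c ∧ ∀ t : ℝ, 0 < t →
      ENNReal.ofReal (c * (Ioi (1 : ℝ)).indicator (fun u => (1 + Real.log u) ^ k / u) t) ≤
        (Rop n 2)^[k + 1] ((Ioo (0 : ℝ) 1).indicator 1) t := by
  have h2n : (2 : ℝ) ≤ n := by exact_mod_cast hn.trans' (by norm_num)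
  refine ⟨1 / (k + 1)!, by positivity, fun t _ => ?_⟩
  by_cases ht : 1 < t
  · rw [indicator_of_mem (show t ∈ Ioi 1 from ht)]
    convert ofReal_one_add_log_pow_div_le_iterate_Rop zero_le_two h2n k ht using 2
    field_simp
  · simp [indicator_of_notMem (show t ∉ Ioi 1 from ht)]
end
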